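/- arXiv:1409.2111 — 2 statements merged into one kernel-verified Lean document; each statement's English description precedes it below -/
import Mathlib

section
/- An integer pair (x,y) with y > 0 satisfies x² = 5y² + 4 if and only if y = φ_{2n} for some positive integer n (where φ denotes the Fibonacci sequence with φ_0 = 0, φ_1 = 1); moreover in that case x = ±(φ_{2n-1} + φ_{2n+1}). -/
lemma fibZ_rec (n : ℕ) : (Nat.fib (n+2) : ℤ) = Nat.fib n + Nat.fib (n+1) := by
  push_cast [Nat.fib_add_two]; ring

lemma pell_id (m : ℕ) :
    ((Nat.fib (2*m+1) : ℤ) + Nat.fib (2*m+3))^2 = 5*((Nat.fib (2*m+2):ℤ))^2 + 4 := by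
  induction m with
  | zero => norm_num [Nat.fib]
  | succ t ih =>
    have h3 : (Nat.fib (2*t+3) : ℤ) = Nat.fib (2*t+1) + Nat.fib (2*t+2) := fibZ_rec (2*t+1)
    have h4 : (Nat.fib (2*t+4) : ℤ) = Nat.fib (2*t+2) + Nat.fib (2*t+3) := fibZ_rec (2*t+2)
    have h5 : (Nat.fib (2*t+5) : ℤ) = Nat.fib (2*t+3) + Nat.fib (2*t+4) := fibZ_rec (2*t+3)
    have e1 : 2*(t+1)+1 = 2*t+3 := by ring
    have e2 : 2*(t+1)+2 = 2*t+4 := by ring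
    have e3 : 2*(t+1)+3 = 2*t+5 := by ring
    rw [e1, e2, e3, h5, h4, h3]
    rw [h3] at ih
    linear_combination ih

lemma descend : ∀ k : ℕ, ∀ x y : ℤ, 0 < x → 0 < y → y ≤ (k:ℤ) → x^2 = 5*y^2+4 →
    ∃ n : ℕ, 0 < n ∧ y = Nat.fib (2*n) ∧ x = (Nat.fib (2*n-1):ℤ) + Nat.fib (2*n+1) := by
  intro k
  induction k with
  | zero => intro x y hx hy hk heq; exfalso; omega
  | succ k ih =>
    intro x y hx hy hk heq
    push_cast at hk
    rcases eq_or_lt_of_le (show (1:ℤ) ≤ y from hy) with h1 | h2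
    · refine ⟨1, one_pos, by norm_num [← h1], ?_⟩
      have hx3 : (x-3)*(x+3) = 0 := by rw [← h1] at heq; linarith
      rcases mul_eq_zero.mp hx3 with h | h
      · norm_num [Nat.fib]; linarith
      · exfalso; linarith
    · -- y ≥ 2
      have hpar : (2:ℤ) ∣ (x - y) := by
        have h2z : ((x - y : ℤ) : ZMod 2) = 0 := by
          have h := congrArg (fun t : ℤ => (t : ZMod 2)) heq
          push_cast at h
          have hsq : ∀ a : ZMod 2, a^2 = a := by decide
          have h5 : (5 : ZMod 2) = 1 := by decide
          have h4 : (4 : ZMod 2) = 0 := by decide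
          rw [hsq, hsq, h5, h4] at h
          push_cast
          rw [h]; ring
        exact (ZMod.intCast_zmod_eq_zero_iff_dvd _ 2).mp h2z
      obtain ⟨d, hd⟩ := hpar
      set a := 3*d - y with ha_def
      set b := y - d with hb_def
      have heq' : a^2 = 5*b^2 + 4 := by
        rw [ha_def, hb_def]
        linear_combination heq - (x + y + 2*d) * hd
      have hxy : x < 3*y := by nlinarith
      have hx5 : 5*y < 3*x := by nlinarith
      have hyx : y < x := by nlinarith
      have hb : 0 < b := by omega
      have ha : 0 < a := by omega
      have hblt : b < y := by omega
      obtain ⟨m, hm, hbm, ham⟩ := ih a b ha hb (by omega) heq'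
      obtain ⟨t, rfl⟩ : ∃ t, m = t+1 := ⟨m-1, by omega⟩
      have i1 : 2*(t+1) = 2*t+2 := by ring
      have i2 : 2*(t+1) - 1 = 2*t+1 := by omega
      have i3 : 2*(t+1) + 1 = 2*t+3 := by ring
      rw [i1] at hbm; rw [i2, i3] at ham
      have h3 : (Nat.fib (2*t+3) : ℤ) = Nat.fib (2*t+1) + Nat.fib (2*t+2) := fibZ_rec (2*t+1)
      have h4 : (Nat.fib (2*t+4) : ℤ) = Nat.fib (2*t+2) + Nat.fib (2*t+3) := fibZ_rec (2*t+2)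
      have h5 : (Nat.fib (2*t+5) : ℤ) = Nat.fib (2*t+3) + Nat.fib (2*t+4) := fibZ_rec (2*t+3)
      refine ⟨t+2, by omega, ?_, ?_⟩
      · have j1 : 2*(t+2) = 2*t+4 := by ring
        rw [j1, h4, h3]
        rw [ha_def] at ham; rw [hb_def] at hbm
        linarith [ham, hbm, h3]
      · have j2 : 2*(t+2) - 1 = 2*t+3 := by omega
        have j3 : 2*(t+2) + 1 = 2*t+5 := by ring
        rw [j2, j3, h5, h4, h3]
        rw [ha_def] at ham; rw [hb_def] at hbm
        linarith [ham, hbm]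

theorem pell_fib (x y : ℤ) (hy : 0 < y) :
    x ^ 2 = 5 * y ^ 2 + 4 ↔
      ∃ n : ℕ, 0 < n ∧ y = Nat.fib (2 * n) ∧
        (x = (Nat.fib (2 * n - 1) : ℤ) + Nat.fib (2 * n + 1) ∨
         x = -((Nat.fib (2 * n - 1) : ℤ) + Nat.fib (2 * n + 1))) := by
  constructor
  · intro h
    have hx0 : x ≠ 0 := by intro h0; rw [h0] at h; nlinarith
    have hyk : y ≤ ((y.toNat : ℕ) : ℤ) := le_of_eq (Int.toNat_of_nonneg hy.le).symm
    rcases hx0.lt_or_gt with hneg | hpos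
    · obtain ⟨n, hn, h1, h2⟩ := descend y.toNat (-x) y (by omega) hy hyk (by linarith [h]; )
      exact ⟨n, hn, h1, Or.inr (by linarith)⟩
    · obtain ⟨n, hn, h1, h2⟩ := descend y.toNat x y hpos hy hyk h
      exact ⟨n, hn, h1, Or.inl h2⟩
  · rintro ⟨n, hn, rfl, hx⟩
    obtain ⟨t, rfl⟩ : ∃ t, n = t+1 := ⟨n-1, by omega⟩
    have i1 : 2*(t+1) = 2*t+2 := by ring
    have i2 : 2*(t+1) - 1 = 2*t+1 := by omega
    have i3 : 2*(t+1) + 1 = 2*t+3 := by ring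
    rw [i2, i3] at hx; rw [i1]
    have := pell_id t
    rcases hx with h | h <;> rw [h] <;> linarith [this]
end

section
/- The only solutions in positive integers (x, y, k) of the equation (k·y - 3)·x = 3·y + k are: (1,2,9), (1,3,6), (1,4,5), (1,7,4), (2,1,9), (3,1,6), (4,1,5), (7,1,4), (4,13,1), (5,8,1), (8,5,1), (13,4,1), (2,8,2), (8,2,2), (2,3,3), (3,2,3), (2,2,4). -/
theorem diophantine_solutions (x y k : ℤ) (hx : 0 < x) (hy : 0 < y) (hk : 0 < k) :
    (k * y - 3) * x = 3 * y + k ↔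
      (x, y, k) = (1, 2, 9) ∨ (x, y, k) = (1, 3, 6) ∨ (x, y, k) = (1, 4, 5) ∨
      (x, y, k) = (1, 7, 4) ∨ (x, y, k) = (2, 1, 9) ∨ (x, y, k) = (3, 1, 6) ∨
      (x, y, k) = (4, 1, 5) ∨ (x, y, k) = (7, 1, 4) ∨ (x, y, k) = (4, 13, 1) ∨
      (x, y, k) = (5, 8, 1) ∨ (x, y, k) = (8, 5, 1) ∨ (x, y, k) = (13, 4, 1) ∨
      (x, y, k) = (2, 8, 2) ∨ (x, y, k) = (8, 2, 2) ∨ (x, y, k) = (2, 3, 3) ∨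
      (x, y, k) = (3, 2, 3) ∨ (x, y, k) = (2, 2, 4) := by
  constructor
  · intro h
    have heq : k * (x * y - 1) = 3 * (x + y) := by linear_combination h
    have hxy : 2 ≤ x * y := by nlinarith
    simp only [Prod.mk.injEq]
    rcases eq_or_lt_of_le (show (1:ℤ) ≤ x from hx) with hx1 | hx2
    · -- x = 1
      have hx1 : x = 1 := hx1.symm
      subst hx1
      have hd : y - 1 ∣ 6 := ⟨k - 3, by linear_combination -heq⟩
      have hy7 : y ≤ 7 := by
        have := Int.le_of_dvd (by norm_num) hd
        omega
      clear hd hxy h hx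
      interval_cases y <;> (try norm_num) <;> omega
    · rcases eq_or_lt_of_le (show (1:ℤ) ≤ y from hy) with hy1 | hy2
      · -- y = 1
        have hy1 : y = 1 := hy1.symm
        subst hy1
        have hd : x - 1 ∣ 6 := ⟨k - 3, by linear_combination -heq⟩
        have hx7 : x ≤ 7 := by
          have := Int.le_of_dvd (by norm_num) hd
          omega
        clear hd hxy h hy
        interval_cases x <;> (try norm_num) <;> omega
      · -- x ≥ 2, y ≥ 2
        have hx2' : 2 ≤ x := hx2
        have hy2' : 2 ≤ y := hy2
        have hk4 : k ≤ 4 := by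
          by_contra hkc
          push_neg at hkc
          have h1 : (0:ℤ) ≤ (x - 2) * (5 * y - 3) :=
            mul_nonneg (by linarith) (by linarith)
          have h5 : 5 * (x * y - 1) ≤ k * (x * y - 1) :=
            mul_le_mul_of_nonneg_right (by linarith) (by nlinarith)
          nlinarith [h1, h5]
        interval_cases k
        · -- k = 1
          have hxb : x ≤ 13 := by
            by_contra hc
            push_neg at hc
            have hyb : y ≤ 3 := by
              by_contra hc2
              push_neg at hc2
              have h1 : (0:ℤ) ≤ (x - 14) * (y - 4) :=
                mul_nonneg (by linarith) (by linarith)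
              nlinarith [h1]
            interval_cases y <;> (try norm_num) <;> omega
          interval_cases x <;> (try norm_num) <;> omega
        · -- k = 2
          have hxb : x ≤ 8 := by
            by_contra hc
            push_neg at hc
            have hyb : y ≤ 3 := by
              by_contra hc2
              push_neg at hc2
              have h1 : (0:ℤ) ≤ (x - 9) * (y - 4) :=
                mul_nonneg (by linarith) (by linarith)
              nlinarith [h1]
            interval_cases y <;> (try norm_num) <;> omega
          interval_cases x <;> (try norm_num) <;> omega
        · -- k = 3
          have hxb : x ≤ 3 := by
            by_contra hc
            push_neg at hc
            have hyb : y ≤ 3 := by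
              by_contra hc2
              push_neg at hc2
              have h1 : (0:ℤ) ≤ (x - 4) * (y - 4) :=
                mul_nonneg (by linarith) (by linarith)
              nlinarith [h1]
            interval_cases y <;> (try norm_num) <;> omega
          interval_cases x <;> (try norm_num) <;> omega
        · -- k = 4
          have hxb : x ≤ 2 := by
            by_contra hc
            push_neg at hc
            have hyb : y ≤ 3 := by
              by_contra hc2
              push_neg at hc2
              have h1 : (0:ℤ) ≤ (x - 3) * (y - 4) :=
                mul_nonneg (by linarith) (by linarith)
              nlinarith [h1]
            interval_cases y <;> (try norm_num) <;> omega
          interval_cases x <;> (try norm_num) <;> omega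
  · rintro (h|h|h|h|h|h|h|h|h|h|h|h|h|h|h|h|h) <;>
      (simp only [Prod.mk.injEq] at h; obtain ⟨rfl, rfl, rfl⟩ := h; norm_num)
end
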